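/- Inverse transformation of the wave equation: let v : ℝ² → ℝ be twice continuously differentiable on Q = (0,1) × (0,T) and satisfy, for all (y,t) ∈ Q, ∂ₜₜv(y,t) − (2ky/(1+kt)) ∂ₜ∂_y v(y,t) + (2k²y/(1+kt)²) ∂_y v(y,t) − ((1 − k²y²)/(1+kt)²) ∂_y∂_y v(y,t) = 0. Define u(x,t) = v(x/(1+kt), t). Then u satisfies the wave equation ∂ₜₜu(x,t) − ∂ₓₓu(x,t) = 0 for all (x,t) ∈ Q̂. -/

import Mathlib

/-!
Along a curve `γ`, the second derivative of `f ∘ γ` is `D²f(γ)(γ', γ') + Df(γ) γ''`.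
Applying this to the curves `ξ ↦ (ξ/(1+kt), t)` and `τ ↦ (x/(1+kτ), τ)` and expanding the
symmetric second derivative of `v` in coordinates shows that, with `y = x/(1+kt)`,
`u_tt − u_xx` at `(x, t)` is exactly the left-hand side of the equation for `v` at `(y, t)`.
-/

open Filter Topology

section SecondDerivativeAlongCurve

variable {E F : Type*} [NormedAddCommGroup E] [NormedSpace ℝ E]
  [NormedAddCommGroup F] [NormedSpace ℝ F] {f : E → F}

theorem hasDerivAt_fderiv_comp_apply {γ w : ℝ → E} {γ' w' : E} {t : ℝ}
    (hf : DifferentiableAt ℝ (fderiv ℝ f) (γ t)) (hγ : HasDerivAt γ γ' t)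
    (hw : HasDerivAt w w' t) :
    HasDerivAt (fun s => fderiv ℝ f (γ s) (w s))
      (fderiv ℝ (fderiv ℝ f) (γ t) γ' (w t) + fderiv ℝ f (γ t) w') t :=
  (hf.hasFDerivAt.comp_hasDerivAt t hγ).clm_apply hw

theorem deriv_deriv_comp_of_contDiffAt {γ γ' : ℝ → E} {γ'' : E} {t : ℝ}
    (hf : ContDiffAt ℝ 2 f (γ t)) (hγ : ∀ᶠ s in 𝓝 t, HasDerivAt γ (γ' s) s)
    (hγ' : HasDerivAt γ' γ'' t) :
    deriv (deriv fun s => f (γ s)) t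
      = fderiv ℝ (fderiv ℝ f) (γ t) (γ' t) (γ' t) + fderiv ℝ f (γ t) γ'' := by
  have hγt : HasDerivAt γ (γ' t) t := hγ.self_of_nhds
  have hf_near : ∀ᶠ s in 𝓝 t, ContDiffAt ℝ 2 f (γ s) :=
    hγt.continuousAt.eventually (hf.eventually (by simp))
  have hderiv : deriv (fun s => f (γ s)) =ᶠ[𝓝 t] fun s => fderiv ℝ f (γ s) (γ' s) :=
    (hf_near.and hγ).mono fun s ⟨hfs, hγs⟩ =>
      ((hfs.differentiableAt two_ne_zero).hasFDerivAt.comp_hasDerivAt s hγs).deriv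
  rw [hderiv.deriv_eq]
  exact (hasDerivAt_fderiv_comp_apply
    ((hf.fderiv_right (m := 1) le_rfl).differentiableAt one_ne_zero) hγt hγ').deriv

end SecondDerivativeAlongCurve

section PartialDerivatives

variable {F : Type*} [NormedAddCommGroup F] [NormedSpace ℝ F] {v : ℝ × ℝ → F} {y t : ℝ}

theorem deriv_fst_eq_fderiv_apply (hv : DifferentiableAt ℝ v (y, t)) :
    deriv (fun η => v (η, t)) y = fderiv ℝ v (y, t) (1, 0) :=
  (hv.hasFDerivAt.comp_hasDerivAt y ((hasDerivAt_id y).prodMk (hasDerivAt_const y t))).deriv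

theorem deriv_deriv_fst_eq (hv : ContDiffAt ℝ 2 v (y, t)) :
    deriv (deriv fun η => v (η, t)) y = fderiv ℝ (fderiv ℝ v) (y, t) (1, 0) (1, 0) := by
  simpa using deriv_deriv_comp_of_contDiffAt (γ := fun η => (η, t)) (γ' := fun _ => (1, 0))
    hv (.of_forall fun η => (hasDerivAt_id η).prodMk (hasDerivAt_const η t))
    (hasDerivAt_const y _)

theorem deriv_deriv_snd_eq (hv : ContDiffAt ℝ 2 v (y, t)) :
    deriv (deriv fun τ => v (y, τ)) t = fderiv ℝ (fderiv ℝ v) (y, t) (0, 1) (0, 1) := by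
  simpa using deriv_deriv_comp_of_contDiffAt (γ := fun τ => (y, τ)) (γ' := fun _ => (0, 1))
    hv (.of_forall fun τ => (hasDerivAt_const τ y).prodMk (hasDerivAt_id τ))
    (hasDerivAt_const t _)

theorem deriv_snd_deriv_fst_eq (hv : ContDiffAt ℝ 2 v (y, t)) :
    deriv (fun τ => deriv (fun η => v (η, τ)) y) t
      = fderiv ℝ (fderiv ℝ v) (y, t) (0, 1) (1, 0) := by
  have hslice : HasDerivAt (fun τ => ((y, τ) : ℝ × ℝ)) (0, 1) t :=
    (hasDerivAt_const t y).prodMk (hasDerivAt_id t)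
  have hv_near : ∀ᶠ τ in 𝓝 t, ContDiffAt ℝ 2 v (y, τ) :=
    hslice.continuousAt.eventually (hv.eventually (by simp))
  have hderiv : (fun τ => deriv (fun η => v (η, τ)) y) =ᶠ[𝓝 t]
      fun τ => fderiv ℝ v (y, τ) (1, 0) :=
    hv_near.mono fun τ hτ => deriv_fst_eq_fderiv_apply (hτ.differentiableAt two_ne_zero)
  rw [hderiv.deriv_eq]
  simpa using (hasDerivAt_fderiv_comp_apply
    ((hv.fderiv_right (m := 1) le_rfl).differentiableAt one_ne_zero) hslice
    (hasDerivAt_const t ((1 : ℝ), (0 : ℝ)))).deriv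

end PartialDerivatives

namespace ContinuousLinearMap

variable {F : Type*} [NormedAddCommGroup F] [NormedSpace ℝ F]

theorem apply_prod_mk (L : ℝ × ℝ →L[ℝ] F) (a b : ℝ) :
    L (a, b) = a • L (1, 0) + b • L (0, 1) := by
  rw [← map_smul, ← map_smul, ← map_add]
  simp

theorem apply_prod_mk_apply_prod_mk (B : ℝ × ℝ →L[ℝ] ℝ × ℝ →L[ℝ] F) (a b c d : ℝ) :
    B (a, b) (c, d) = (a * c) • B (1, 0) (1, 0) + (a * d) • B (1, 0) (0, 1)
      + (b * c) • B (0, 1) (1, 0) + (b * d) • B (0, 1) (0, 1) := by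
  rw [apply_prod_mk B, add_apply, smul_apply, smul_apply, apply_prod_mk (B (1, 0)),
    apply_prod_mk (B (0, 1))]
  module

end ContinuousLinearMap

section MovingBoundary

variable {F : Type*} [NormedAddCommGroup F] [NormedSpace ℝ F] {v : ℝ × ℝ → F} {k x t : ℝ}

theorem hasDerivAt_one_add_mul (k t : ℝ) : HasDerivAt (fun τ => 1 + k * τ) k t := by
  simpa using ((hasDerivAt_id t).const_mul k).const_add 1

theorem hasDerivAt_div_one_add_mul (x : ℝ) (h : 1 + k * t ≠ 0) :
    HasDerivAt (fun τ => x / (1 + k * τ)) (-(x * k) / (1 + k * t) ^ 2) t :=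
  ((hasDerivAt_const t x).div (hasDerivAt_one_add_mul k t) h).congr_deriv (by ring)

theorem hasDerivAt_div_one_add_mul_sq (x : ℝ) (h : 1 + k * t ≠ 0) :
    HasDerivAt (fun τ => x / (1 + k * τ) ^ 2) (-(2 * x * k) / (1 + k * t) ^ 3) t :=
  ((hasDerivAt_const t x).div ((hasDerivAt_one_add_mul k t).pow 2)
    (pow_ne_zero 2 h)).congr_deriv (by simp only [Pi.pow_apply]; field_simp; ring)

theorem deriv_deriv_div_fst_eq (hv : ContDiffAt ℝ 2 v (x / (1 + k * t), t)) :
    deriv (deriv fun ξ => v (ξ / (1 + k * t), t)) x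
      = fderiv ℝ (fderiv ℝ v) (x / (1 + k * t), t) (1 / (1 + k * t), 0) (1 / (1 + k * t), 0) := by
  simpa using deriv_deriv_comp_of_contDiffAt (γ := fun ξ => (ξ / (1 + k * t), t))
    (γ' := fun _ => (1 / (1 + k * t), 0)) hv
    (.of_forall fun ξ => ((hasDerivAt_id ξ).div_const _).prodMk (hasDerivAt_const ξ t))
    (hasDerivAt_const x _)

theorem deriv_deriv_snd_div_eq (h : 1 + k * t ≠ 0) (hv : ContDiffAt ℝ 2 v (x / (1 + k * t), t)) :
    deriv (deriv fun τ => v (x / (1 + k * τ), τ)) t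
      = fderiv ℝ (fderiv ℝ v) (x / (1 + k * t), t)
          (-(x * k) / (1 + k * t) ^ 2, 1) (-(x * k) / (1 + k * t) ^ 2, 1)
        + fderiv ℝ v (x / (1 + k * t), t) (2 * k ^ 2 * x / (1 + k * t) ^ 3, 0) := by
  have h_near : ∀ᶠ τ in 𝓝 t, 1 + k * τ ≠ 0 :=
    (continuous_const.add (continuous_const.mul continuous_id)).continuousAt.eventually_ne h
  refine deriv_deriv_comp_of_contDiffAt (γ := fun τ => (x / (1 + k * τ), τ))
    (γ' := fun τ => (-(x * k) / (1 + k * τ) ^ 2, 1)) hv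
    (h_near.mono fun τ hτ => (hasDerivAt_div_one_add_mul x hτ).prodMk (hasDerivAt_id τ)) ?_
  exact ((hasDerivAt_div_one_add_mul_sq (-(x * k)) h).prodMk
    (hasDerivAt_const t (1 : ℝ))).congr_deriv (Prod.ext (by ring) rfl)

end MovingBoundary

theorem wave_equation_inverse_transformation_general
    (T k : ℝ)
    (Qhat : Set (ℝ × ℝ))
    (hQhat : Qhat = {p : ℝ × ℝ | 0 < p.2 ∧ p.2 < T ∧ 0 < p.1 ∧ p.1 < 1 + k * p.2})
    (v : ℝ × ℝ → ℝ)
    (hv : ContDiffOn ℝ 2 v (Set.Ioo (0 : ℝ) 1 ×ˢ Set.Ioo (0 : ℝ) T))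
    (heq : ∀ q ∈ Set.Ioo (0 : ℝ) 1 ×ˢ Set.Ioo (0 : ℝ) T,
      deriv (deriv (fun τ => v (q.1, τ))) q.2
        - (2 * k * q.1 / (1 + k * q.2)) *
            deriv (fun τ => deriv (fun η => v (η, τ)) q.1) q.2
        + (2 * k ^ 2 * q.1 / (1 + k * q.2) ^ 2) * deriv (fun η => v (η, q.2)) q.1
        - ((1 - k ^ 2 * q.1 ^ 2) / (1 + k * q.2) ^ 2) *
            deriv (deriv (fun η => v (η, q.2))) q.1 = 0)
    (u : ℝ × ℝ → ℝ) (hu : u = fun p => v (p.1 / (1 + k * p.2), p.2)) :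
    ∀ p ∈ Qhat,
      deriv (deriv (fun τ => u (p.1, τ))) p.2 -
        deriv (deriv (fun ξ => u (ξ, p.2))) p.1 = 0 := by
  subst hQhat hu
  rintro ⟨x, t⟩ ⟨ht0, htT, hx0, hxα⟩
  dsimp only at ht0 htT hx0 hxα ⊢
  have hα : 0 < 1 + k * t := hx0.trans hxα
  have hq : (x / (1 + k * t), t) ∈ Set.Ioo (0 : ℝ) 1 ×ˢ Set.Ioo (0 : ℝ) T :=
    ⟨⟨div_pos hx0 hα, (div_lt_one hα).2 hxα⟩, ht0, htT⟩
  have hvq : ContDiffAt ℝ 2 v (x / (1 + k * t), t) :=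
    hv.contDiffAt ((isOpen_Ioo.prod isOpen_Ioo).mem_nhds hq)
  have hsymm := hvq.isSymmSndFDerivAt (by norm_num)
  have hpde := heq _ hq
  dsimp only at hpde
  rw [deriv_deriv_snd_eq hvq, deriv_snd_deriv_fst_eq hvq,
    deriv_fst_eq_fderiv_apply (hvq.differentiableAt two_ne_zero), deriv_deriv_fst_eq hvq] at hpde
  rw [deriv_deriv_snd_div_eq hα.ne' hvq, deriv_deriv_div_fst_eq hvq,
    ContinuousLinearMap.apply_prod_mk_apply_prod_mk _ (-(x * k) / (1 + k * t) ^ 2),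
    ContinuousLinearMap.apply_prod_mk_apply_prod_mk _ (1 / (1 + k * t)),
    ContinuousLinearMap.apply_prod_mk _ (2 * k ^ 2 * x / (1 + k * t) ^ 3), hsymm (1, 0) (0, 1)]
  simp only [smul_eq_mul]
  field_simp at hpde ⊢
  linear_combination hpde

/-- Inverse transformation of the wave equation: if v is C² on Q = (0,1) × (0,T) and
satisfies v_tt − (2ky/(1+kt)) v_ty + (2k²y/(1+kt)²) v_y − ((1 − k²y²)/(1+kt)²) v_yy = 0
there, then u(x,t) = v(x/(1+kt), t) satisfies u_tt − u_xx = 0 on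
Q̂ = {(x,t) : 0 < t < T, 0 < x < 1+kt}. -/
theorem wave_equation_inverse_transformation
    (T k : ℝ) (hT : 0 < T) (hk0 : 0 < k) (hk1 : k < 1)
    (Qhat : Set (ℝ × ℝ))
    (hQhat : Qhat = {p : ℝ × ℝ | 0 < p.2 ∧ p.2 < T ∧ 0 < p.1 ∧ p.1 < 1 + k * p.2})
    (v : ℝ × ℝ → ℝ)
    (hv : ContDiffOn ℝ 2 v (Set.Ioo (0 : ℝ) 1 ×ˢ Set.Ioo (0 : ℝ) T))
    (heq : ∀ q ∈ Set.Ioo (0 : ℝ) 1 ×ˢ Set.Ioo (0 : ℝ) T,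
      deriv (deriv (fun τ => v (q.1, τ))) q.2
        - (2 * k * q.1 / (1 + k * q.2)) *
            deriv (fun τ => deriv (fun η => v (η, τ)) q.1) q.2
        + (2 * k ^ 2 * q.1 / (1 + k * q.2) ^ 2) * deriv (fun η => v (η, q.2)) q.1
        - ((1 - k ^ 2 * q.1 ^ 2) / (1 + k * q.2) ^ 2) *
            deriv (deriv (fun η => v (η, q.2))) q.1 = 0)
    (u : ℝ × ℝ → ℝ) (hu : u = fun p => v (p.1 / (1 + k * p.2), p.2)) :
    ∀ p ∈ Qhat,
      deriv (deriv (fun τ => u (p.1, τ))) p.2 -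
        deriv (deriv (fun ξ => u (ξ, p.2))) p.1 = 0 :=
  wave_equation_inverse_transformation_general T k Qhat hQhat v hv heq u hu
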